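/- arXiv:2012.04837 — 3 statements merged into one kernel-verified Lean document; each statement's English description precedes it below -/
import Mathlib

section
/- For finite types X and Z, let p_n and p_a be joint probability mass functions on X × Z such that p_a(x,z) > 0 whenever p_n(x,z) > 0, and such that p_n_Z(z) > 0 for relevant z (so all logarithms are defined). Then KL[p_n ‖ p_a] = I_{p_n}(X;Z) − H(p_n_Z) + Σ_x p_n_X(x) · H(p_n(·|x), p_a(·|x)) + KL[p_n_X ‖ p_a_X], i.e., the joint KL divergence equals the mutual information of p_n, minus the entropy of the latent marginal of p_n, plus the expected cross entropy between the conditionals of p_n and p_a, plus the KL divergence between the marginals on X. -/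
/-! Every term on the right-hand side is an expectation under `pn`: the entropy of the latent
marginal is that of `-log margZ pn`, the conditional cross entropies that of `-log condZ pa`, and
the marginal KL divergence that of `log (margX pn / margX pa)`. Wherever `pn > 0`,
`log (pn / pa) = log (pn / (margX pn * margZ pn)) + log margZ pn - log condZ pa
  + log (margX pn / margX pa)`. -/

open Finset Real MeasureTheory

noncomputable section

/-- A probability mass function on a finite type. -/
def IsPmf {Ω : Type*} [Fintype Ω] (p : Ω → ℝ) : Prop :=
  (∀ ω, 0 ≤ p ω) ∧ ∑ ω, p ω = 1

/-- KL divergence between pmfs on a finite type.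
(The convention `0 · log (0 / q ω) = 0` holds automatically since `Real.log 0 = 0`.) -/
def KL {Ω : Type*} [Fintype Ω] (p q : Ω → ℝ) : ℝ :=
  ∑ ω, p ω * Real.log (p ω / q ω)

/-- Marginal on the first component of a joint pmf. -/
def margX {X Z : Type*} [Fintype X] [Fintype Z] (p : X × Z → ℝ) (x : X) : ℝ :=
  ∑ z, p (x, z)

/-- Marginal on the second component of a joint pmf. -/
def margZ {X Z : Type*} [Fintype X] [Fintype Z] (p : X × Z → ℝ) (z : Z) : ℝ :=
  ∑ x, p (x, z)

/-- Conditional pmf of `z` given `x`. -/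
def condZ {X Z : Type*} [Fintype X] [Fintype Z] (p : X × Z → ℝ) (x : X) (z : Z) : ℝ :=
  p (x, z) / margX p x

/-- Conditional pmf of `x` given `z`. -/
def condX {X Z : Type*} [Fintype X] [Fintype Z] (p : X × Z → ℝ) (z : Z) (x : X) : ℝ :=
  p (x, z) / margZ p z

/-- Shannon entropy of a pmf on a finite type. -/
def entropy {Ω : Type*} [Fintype Ω] (p : Ω → ℝ) : ℝ :=
  -∑ ω, p ω * Real.log (p ω)

/-- Cross entropy between two pmfs on a finite type. -/
def crossEnt {Ω : Type*} [Fintype Ω] (p q : Ω → ℝ) : ℝ :=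
  -∑ ω, p ω * Real.log (q ω)

/-- Mutual information of a joint pmf on `X × Z`. -/
def mutualInfo {X Z : Type*} [Fintype X] [Fintype Z] (p : X × Z → ℝ) : ℝ :=
  KL p (fun xz => margX p xz.1 * margZ p xz.2)


section Marginals

variable {X Z : Type*} [Fintype X] [Fintype Z]

theorem sum_margX_mul (p : X × Z → ℝ) (f : X → ℝ) :
    ∑ x, margX p x * f x = ∑ ω, p ω * f ω.1 := by
  simp only [margX, Finset.sum_mul, Fintype.sum_prod_type]

theorem sum_margZ_mul (p : X × Z → ℝ) (f : Z → ℝ) :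
    ∑ z, margZ p z * f z = ∑ ω, p ω * f ω.2 := by
  simp only [margZ, Finset.sum_mul, Fintype.sum_prod_type]
  exact Finset.sum_comm

theorem le_margX {p : X × Z → ℝ} (hp : ∀ ω, 0 ≤ p ω) (x : X) (z : Z) :
    p (x, z) ≤ margX p x :=
  Finset.single_le_sum (fun z _ => hp (x, z)) (Finset.mem_univ z)

theorem le_margZ {p : X × Z → ℝ} (hp : ∀ ω, 0 ≤ p ω) (x : X) (z : Z) :
    p (x, z) ≤ margZ p z :=
  Finset.single_le_sum (fun x _ => hp (x, z)) (Finset.mem_univ x)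

theorem apply_eq_zero_of_margX_eq_zero {p : X × Z → ℝ} (hp : ∀ ω, 0 ≤ p ω) {x : X}
    (hx : margX p x = 0) (z : Z) : p (x, z) = 0 :=
  le_antisymm (hx ▸ le_margX hp x z) (hp (x, z))

theorem entropy_margZ (p : X × Z → ℝ) :
    entropy (margZ p) = -∑ ω, p ω * Real.log (margZ p ω.2) := by
  rw [entropy, sum_margZ_mul p fun z => Real.log (margZ p z)]

theorem KL_margX (p q : X × Z → ℝ) :
    KL (margX p) (margX q) = ∑ ω, p ω * Real.log (margX p ω.1 / margX q ω.1) := by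
  rw [KL, sum_margX_mul p fun x => Real.log (margX p x / margX q x)]

theorem margX_mul_crossEnt_condZ (p : X × Z → ℝ) {x : X} (hx : margX p x ≠ 0) (q : Z → ℝ) :
    margX p x * crossEnt (condZ p x) q = -∑ z, p (x, z) * Real.log (q z) := by
  simp only [crossEnt, condZ, mul_neg, Finset.mul_sum, ← mul_assoc, mul_div_cancel₀ _ hx]

/-- The filter only drops indices where `condZ p x` is junk; their summands vanish anyway because
`p (x, ·) = 0` there. -/
theorem sum_margX_mul_crossEnt_condZ {p : X × Z → ℝ} (hp : ∀ ω, 0 ≤ p ω) (q : X × Z → ℝ) :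
    ∑ x ∈ Finset.univ.filter (fun x => 0 < margX p x),
        margX p x * crossEnt (condZ p x) (condZ q x) =
      -∑ ω, p ω * Real.log (condZ q ω.1 ω.2) := by
  rw [Finset.sum_filter, Fintype.sum_prod_type, ← Finset.sum_neg_distrib]
  refine Finset.sum_congr rfl fun x _ => ?_
  split_ifs with hx
  · exact margX_mul_crossEnt_condZ p hx.ne' _
  · have hx0 : margX p x = 0 := le_antisymm (not_lt.1 hx) (Finset.sum_nonneg fun z _ => hp _)
    simp [apply_eq_zero_of_margX_eq_zero hp hx0]

end Marginals

theorem Real.log_div_eq_decomposition {a b mx mxb mz : ℝ} (ha : a ≠ 0) (hb : b ≠ 0)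
    (hmx : mx ≠ 0) (hmxb : mxb ≠ 0) (hmz : mz ≠ 0) :
    Real.log (a / b) =
      Real.log (a / (mx * mz)) + Real.log mz - Real.log (b / mxb) + Real.log (mx / mxb) := by
  rw [Real.log_div ha hb, Real.log_div ha (mul_ne_zero hmx hmz), Real.log_mul hmx hmz,
    Real.log_div hb hmxb, Real.log_div hmx hmxb]
  ring

theorem kl_joint_decomposition_general {X Z : Type*} [Fintype X] [Fintype Z]
    (pn pa : X × Z → ℝ) (hpn : IsPmf pn) (hpa : IsPmf pa)
    (hpos : ∀ x z, 0 < pn (x, z) → 0 < pa (x, z)) :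
    KL pn pa =
      mutualInfo pn - entropy (margZ pn) +
        (∑ x ∈ Finset.univ.filter (fun x => 0 < margX pn x),
          margX pn x * crossEnt (condZ pn x) (condZ pa x)) +
        KL (margX pn) (margX pa) := by
  obtain ⟨hn0, -⟩ := hpn
  obtain ⟨ha0, -⟩ := hpa
  rw [mutualInfo, entropy_margZ, sum_margX_mul_crossEnt_condZ hn0, KL_margX, KL, KL,
    sub_neg_eq_add, ← Finset.sum_neg_distrib, ← Finset.sum_add_distrib, ← Finset.sum_add_distrib,
    ← Finset.sum_add_distrib]
  refine Finset.sum_congr rfl fun ⟨x, z⟩ _ => ?_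
  rcases (hn0 (x, z)).eq_or_lt with hzero | hn
  · simp [← hzero]
  have ha := hpos x z hn
  have hmxa := ha.trans_le (le_margX ha0 x z)
  have hdecomp := Real.log_div_eq_decomposition hn.ne' ha.ne'
    (hn.trans_le (le_margX hn0 x z)).ne' hmxa.ne' (hn.trans_le (le_margZ hn0 x z)).ne'
  rw [condZ, hdecomp]
  ring

/-- Decomposition of the joint KL divergence into mutual information, entropy of the
latent marginal, expected conditional cross entropy, and the KL divergence of the
marginals on `X`. -/
theorem kl_joint_decomposition {X Z : Type*} [Fintype X] [Fintype Z]
    (pn pa : X × Z → ℝ) (hpn : IsPmf pn) (hpa : IsPmf pa)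
    (hpos : ∀ x z, 0 < pn (x, z) → 0 < pa (x, z))
    (hZ : ∀ x z, 0 < pn (x, z) → 0 < margZ pn z) :
    KL pn pa =
      mutualInfo pn - entropy (margZ pn) +
        (∑ x ∈ Finset.univ.filter (fun x => 0 < margX pn x),
          margX pn x * crossEnt (condZ pn x) (condZ pa x)) +
        KL (margX pn) (margX pa) :=
  kl_joint_decomposition_general pn pa hpn hpa hpos
end
end

section
/- (Donsker–Varadhan lower bound, finite form.) For a finite type Ω, let μ and ν be probability mass functions on Ω with ν(ω) > 0 whenever μ(ω) > 0, and let f : Ω → ℝ be any function. Then KL[μ ‖ ν] ≥ Σ_ω μ(ω) · f(ω) − log( Σ_ω ν(ω) · exp(f(ω)) ). -/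
open Finset Real MeasureTheory

noncomputable section

/-! Tilting `ν` by `e^f` gives the pmf `ν e^f / Z`, and `KL[μ ‖ ν] - (Σ μ f - log Z) = KL[μ ‖ ν e^f / Z]`.
The right side is nonnegative by Gibbs' inequality, which is the sum of the pointwise bounds
`a log (a / b) ≥ a - b`, i.e. `log x ≥ 1 - 1 / x`. -/

theorem sub_le_mul_log_div {a b : ℝ} (ha : 0 ≤ a) (hb : 0 ≤ b) (hab : 0 < a → 0 < b) :
    a - b ≤ a * Real.log (a / b) := by
  rcases ha.eq_or_lt with rfl | ha
  · simpa using hb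
  have hb_pos := hab ha
  calc a - b = a * (1 - (a / b)⁻¹) := by field_simp
    _ ≤ a * Real.log (a / b) := by gcongr; exact Real.one_sub_inv_le_log_of_pos (by positivity)

section

variable {Ω : Type*} [Fintype Ω]

theorem sum_sub_sum_le_KL {p q : Ω → ℝ} (hp : ∀ ω, 0 ≤ p ω) (hq : ∀ ω, 0 ≤ q ω)
    (hpq : ∀ ω, 0 < p ω → 0 < q ω) : ∑ ω, p ω - ∑ ω, q ω ≤ KL p q := by
  rw [← Finset.sum_sub_distrib]
  exact Finset.sum_le_sum fun ω _ => sub_le_mul_log_div (hp ω) (hq ω) (hpq ω)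

theorem sum_mul_exp_pos {ν : Ω → ℝ} (hν : IsPmf ν) (f : Ω → ℝ) :
    0 < ∑ ω, ν ω * Real.exp (f ω) := by
  obtain ⟨ω, -, hω⟩ : ∃ ω ∈ univ, (0 : ℝ) < ν ω :=
    Finset.exists_lt_of_sum_lt (by simp [hν.2])
  exact Finset.sum_pos' (fun ω _ => mul_nonneg (hν.1 ω) (Real.exp_pos _).le)
    ⟨ω, mem_univ ω, mul_pos hω (Real.exp_pos _)⟩

def tilt (ν f : Ω → ℝ) (ω : Ω) : ℝ :=
  ν ω * Real.exp (f ω) / ∑ ω', ν ω' * Real.exp (f ω')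

theorem isPmf_tilt {ν : Ω → ℝ} (hν : IsPmf ν) (f : Ω → ℝ) : IsPmf (tilt ν f) := by
  have hZ := sum_mul_exp_pos hν f
  refine ⟨fun ω => div_nonneg (mul_nonneg (hν.1 ω) (Real.exp_pos _).le) hZ.le, ?_⟩
  simp only [tilt]
  rw [← Finset.sum_div, div_self hZ.ne']

theorem KL_tilt {μ ν : Ω → ℝ} (hμ : IsPmf μ) (hν : IsPmf ν)
    (hpos : ∀ ω, 0 < μ ω → 0 < ν ω) (f : Ω → ℝ) :
    KL μ (tilt ν f) = KL μ ν - ∑ ω, μ ω * f ω + Real.log (∑ ω, ν ω * Real.exp (f ω)) := by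
  set Z := ∑ ω, ν ω * Real.exp (f ω)
  have hZ : 0 < Z := sum_mul_exp_pos hν f
  have term : ∀ ω, μ ω * Real.log (μ ω / tilt ν f ω) =
      μ ω * Real.log (μ ω / ν ω) - μ ω * f ω + μ ω * Real.log Z := by
    intro ω
    rcases (hμ.1 ω).eq_or_lt with hμω | hμω
    · simp [← hμω]
    have hνω := hpos ω hμω
    have hratio : μ ω / tilt ν f ω = μ ω / ν ω * Z * Real.exp (-f ω) := by
      change μ ω / (ν ω * Real.exp (f ω) / Z) = _
      rw [Real.exp_neg]
      field_simp
    rw [hratio, Real.log_mul (by positivity) (Real.exp_pos _).ne',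
      Real.log_mul (by positivity) hZ.ne', Real.log_exp]
    ring
  simp only [KL, term, Finset.sum_add_distrib, Finset.sum_sub_distrib, ← Finset.sum_mul, hμ.2,
    one_mul]

end

/-- Donsker–Varadhan lower bound (finite form):
`KL[μ ‖ ν] ≥ Σ_ω μ(ω) · f(ω) − log(Σ_ω ν(ω) · exp(f(ω)))`. -/
theorem donsker_varadhan {Ω : Type*} [Fintype Ω]
    (μ ν : Ω → ℝ) (hμ : IsPmf μ) (hν : IsPmf ν)
    (hpos : ∀ ω, 0 < μ ω → 0 < ν ω) (f : Ω → ℝ) :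
    KL μ ν ≥ ∑ ω, μ ω * f ω - Real.log (∑ ω, ν ω * Real.exp (f ω)) := by
  have hTilt := isPmf_tilt hν f
  have gibbs := sum_sub_sum_le_KL hμ.1 hTilt.1 fun ω hμω =>
    div_pos (mul_pos (hpos ω hμω) (Real.exp_pos _)) (sum_mul_exp_pos hν f)
  rw [hμ.2, hTilt.2, KL_tilt hμ hν hpos f] at gibbs
  linarith
end
end

section
/- (InfoNCE / Contrastive Predictive Coding lower bound, finite form.) For finite types X and Z, let p be a joint probability mass function on X × Z, let K be a positive natural number, and let f : X × Z → ℝ be any function (a critic). Let the K pairs ((x_1,z_1), …, (x_K,z_K)) be drawn i.i.d. from p, i.e., distributed according to the K-fold product pmf p^{⊗K} on (X × Z)^K. Then the mutual information satisfies I_p(X;Z) ≥ E_{p^{⊗K}}[ (1/K) · Σ_{i=1}^K log( exp(f(x_i,z_i)) / ( (1/K) · Σ_{j=1}^K exp(f(x_i,z_j)) ) ) ]. -/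
open Finset Real MeasureTheory

noncomputable section

/-- The K-fold product pmf on tuples of pairs. -/
def prodPmf {X Z : Type*} [Fintype X] [Fintype Z] (p : X × Z → ℝ) (K : ℕ)
    (t : Fin K → X × Z) : ℝ :=
  ∏ i, p (t i)

/-! For each index `i`, the ratio `rᵢ = exp f(xᵢ,zᵢ) / ((1/K) ∑ⱼ exp f(xᵢ,zⱼ))` has expectation `1`
when `xᵢ ~ p_X` is drawn independently of `z₁, …, z_K ~ p_Z` i.i.d.: the `K` ratios are exchangeable
and sum to `K`. Hence `q = (p_X ⊗ p_Z)(xᵢ,zᵢ) · ∏_{l ≠ i} p(x_l,z_l) · rᵢ` has total mass `1`, and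
Gibbs' inequality `E_{p^{⊗K}}[log (q / p^{⊗K})] ≤ 0` unfolds to
`E[log rᵢ] ≤ E[log (p / (p_X ⊗ p_Z))(xᵢ,zᵢ)] = I(X;Z)`. Averaging over `i` gives the bound. -/

section ProductSums

variable {ι Ω : Type*} [Fintype ι] [DecidableEq ι] [Fintype Ω]

theorem prod_update_eq_mul_prod_erase {β : Type*} (F : ι → β → ℝ) (a : ι → β) (i : ι) (b : β) :
    ∏ l, F l (Function.update a i b l) = F i b * ∏ l ∈ univ.erase i, F l (a l) := by
  rw [← mul_prod_erase _ _ (mem_univ i), Function.update_self]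
  congr 1
  exact prod_congr rfl fun l hl => by rw [Function.update_of_ne (ne_of_mem_erase hl)]

theorem sum_pi_prod_erase_mul (a : ι → Ω → ℝ) (i : ι) (G : Ω → ℝ) :
    ∑ u : ι → Ω, (∏ l ∈ univ.erase i, a l (u l)) * G (u i) =
      (∑ ω, G ω) * ∏ l ∈ univ.erase i, ∑ ω, a l ω := by
  calc ∑ u : ι → Ω, (∏ l ∈ univ.erase i, a l (u l)) * G (u i)
      = ∑ u : ι → Ω, ∏ l, Function.update a i G l (u l) :=
        sum_congr rfl fun u _ =>
          (mul_comm _ _).trans (prod_update_eq_mul_prod_erase (fun l g => g (u l)) a i G).symm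
    _ = ∏ l, ∑ ω, Function.update a i G l ω := (Fintype.prod_sum _).symm
    _ = (∑ ω, G ω) * ∏ l ∈ univ.erase i, ∑ ω, a l ω :=
        prod_update_eq_mul_prod_erase (fun _ g => ∑ ω, g ω) a i G

theorem sum_pi_prod_eq_one (b : Ω → ℝ) (hb : ∑ ω, b ω = 1) :
    ∑ v : ι → Ω, ∏ l, b (v l) = 1 := by
  rw [← Fintype.prod_sum (fun _ => b), hb, prod_const_one]

theorem sum_pi_comp_perm (F : (ι → Ω) → ℝ) (σ : Equiv.Perm ι) :
    ∑ v : ι → Ω, F (v ∘ σ) = ∑ v, F v :=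
  Equiv.sum_comp (σ.symm.arrowCongr (Equiv.refl Ω)) F

theorem sum_pi_prod_mul_div_mean_eq_one (b : Ω → ℝ) (hb : ∑ ω, b ω = 1) (g : Ω → ℝ)
    (hg : ∀ ω, 0 < g ω) (i : ι) :
    ∑ v : ι → Ω, (∏ l, b (v l)) * (g (v i) / ((1 / (Fintype.card ι : ℝ)) * ∑ j, g (v j))) = 1 := by
  have : Nonempty ι := ⟨i⟩
  set n : ℝ := (Fintype.card ι : ℝ)
  have hn : n ≠ 0 := Nat.cast_ne_zero.mpr Fintype.card_ne_zero
  let E : ι → ℝ := fun j => ∑ v : ι → Ω, (∏ l, b (v l)) * (g (v j) / ((1 / n) * ∑ k, g (v k)))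
  have hsymm : ∀ j, E j = E i := fun j => by
    refine (sum_pi_comp_perm (fun v => (∏ l, b (v l)) * (g (v j) / ((1 / n) * ∑ k, g (v k))))
      (Equiv.swap i j)).symm.trans (sum_congr rfl fun v _ => ?_)
    simp only [Function.comp_apply, Equiv.swap_apply_right,
      Equiv.prod_comp (Equiv.swap i j) (fun l => b (v l)),
      Equiv.sum_comp (Equiv.swap i j) (fun k => g (v k))]
  have hsum : ∑ j, E j = n := by
    calc ∑ j, E j
        = ∑ v : ι → Ω, (∏ l, b (v l)) * ∑ j, g (v j) / ((1 / n) * ∑ k, g (v k)) := by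
          simp only [E, mul_sum]; exact sum_comm
      _ = ∑ v : ι → Ω, (∏ l, b (v l)) * n := by
          refine sum_congr rfl fun v _ => ?_
          have hS : ∑ k, g (v k) ≠ 0 := (sum_pos (fun k _ => hg (v k)) univ_nonempty).ne'
          rw [← sum_div]
          field_simp
      _ = n := by rw [← sum_mul, sum_pi_prod_eq_one b hb, one_mul]
  have : n * E i = n := by simpa [hsymm] using hsum
  exact mul_left_cancel₀ hn (this.trans (mul_one n).symm)

end ProductSums

theorem sum_mul_log_div_le_sum_sub_sum {Ω : Type*} [Fintype Ω] (w q : Ω → ℝ)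
    (hw : ∀ ω, 0 ≤ w ω) (hq : ∀ ω, 0 ≤ q ω) (hqw : ∀ ω, 0 < w ω → 0 < q ω) :
    ∑ ω, w ω * log (q ω / w ω) ≤ ∑ ω, q ω - ∑ ω, w ω := by
  rw [← sum_sub_distrib]
  refine sum_le_sum fun ω _ => ?_
  rcases (hw ω).eq_or_lt with h0 | hpos
  · simp [← h0, hq ω]
  · calc w ω * log (q ω / w ω) ≤ w ω * (q ω / w ω - 1) :=
          mul_le_mul_of_nonneg_left (log_le_sub_one_of_pos (div_pos (hqw ω hpos) hpos)) hpos.le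
      _ = q ω - w ω := by field_simp

section Marginals

variable {X Z : Type*} [Fintype X] [Fintype Z] {p : X × Z → ℝ}

theorem margX_nonneg (hp : ∀ ω, 0 ≤ p ω) (x : X) : 0 ≤ margX p x :=
  sum_nonneg fun z _ => hp (x, z)

theorem margZ_nonneg (hp : ∀ ω, 0 ≤ p ω) (z : Z) : 0 ≤ margZ p z :=
  sum_nonneg fun x _ => hp (x, z)

theorem margX_pos (hp : ∀ ω, 0 ≤ p ω) {x : X} {z : Z} (h : 0 < p (x, z)) : 0 < margX p x :=
  h.trans_le (single_le_sum (fun z _ => hp (x, z)) (mem_univ z))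

theorem margZ_pos (hp : ∀ ω, 0 ≤ p ω) {x : X} {z : Z} (h : 0 < p (x, z)) : 0 < margZ p z :=
  h.trans_le (single_le_sum (fun x _ => hp (x, z)) (mem_univ x))

theorem sum_margX (hp : ∑ ω, p ω = 1) : ∑ x, margX p x = 1 := by
  rwa [Fintype.sum_prod_type] at hp

theorem sum_margZ (hp : ∑ ω, p ω = 1) : ∑ z, margZ p z = 1 := by
  rwa [Fintype.sum_prod_type, sum_comm] at hp

end Marginals

def nceRatio {X Z : Type*} (f : X × Z → ℝ) {K : ℕ} (t : Fin K → X × Z) (i : Fin K) : ℝ :=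
  exp (f (t i)) / ((1 / (K : ℝ)) * ∑ j, exp (f ((t i).1, (t j).2)))

theorem nceRatio_pos {X Z : Type*} (f : X × Z → ℝ) {K : ℕ} (t : Fin K → X × Z) (i : Fin K) :
    0 < nceRatio f t i :=
  div_pos (exp_pos _) (mul_pos (by simpa using i.pos)
    (sum_pos (fun j _ => exp_pos _) ⟨i, mem_univ i⟩))

section InfoNCE

variable {X Z : Type*} [Fintype X] [Fintype Z] {p : X × Z → ℝ} {K : ℕ}

theorem prodPmf_eq_mul_prod_erase (t : Fin K → X × Z) (i : Fin K) :
    prodPmf p K t = p (t i) * ∏ l ∈ univ.erase i, p (t l) :=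
  (mul_prod_erase _ _ (mem_univ i)).symm

theorem sum_prodPmf (hp : ∑ ω, p ω = 1) : ∑ t, prodPmf p K t = 1 :=
  sum_pi_prod_eq_one p hp

theorem sum_prodPmf_mul_apply (hp : ∑ ω, p ω = 1) (i : Fin K) (h : X × Z → ℝ) :
    ∑ t, prodPmf p K t * h (t i) = ∑ ω, p ω * h ω := by
  calc ∑ t, prodPmf p K t * h (t i)
      = ∑ t : Fin K → X × Z, (∏ l ∈ univ.erase i, p (t l)) * (p (t i) * h (t i)) :=
        sum_congr rfl fun t _ => by rw [prodPmf_eq_mul_prod_erase t i]; ring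
    _ = ∑ ω, p ω * h ω := by
        rw [sum_pi_prod_erase_mul (fun _ => p) i (fun ω => p ω * h ω)]
        simp [hp]

/-- The weight `q` of the argument: `p^{⊗K}` with the `i`-th pair resampled from `p_X ⊗ p_Z`,
reweighted by `nceRatio`. -/
def nceTilt (p : X × Z → ℝ) (f : X × Z → ℝ) (i : Fin K) (t : Fin K → X × Z) : ℝ :=
  (∏ l ∈ univ.erase i, p (t l)) * (margX p (t i).1 * margZ p (t i).2 * nceRatio f t i)

theorem nceTilt_nonneg (hp : ∀ ω, 0 ≤ p ω) (f : X × Z → ℝ) (i : Fin K) (t : Fin K → X × Z) :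
    0 ≤ nceTilt p f i t :=
  mul_nonneg (prod_nonneg fun _ _ => hp _) (mul_nonneg
    (mul_nonneg (margX_nonneg hp _) (margZ_nonneg hp _)) (nceRatio_pos f t i).le)

theorem nceTilt_pos (hp : ∀ ω, 0 ≤ p ω) (f : X × Z → ℝ) (i : Fin K) {t : Fin K → X × Z}
    (ht : ∀ l, 0 < p (t l)) : 0 < nceTilt p f i t :=
  mul_pos (prod_pos fun l _ => ht l) (mul_pos (mul_pos (margX_pos hp (ht i))
    (margZ_pos hp (ht i))) (nceRatio_pos f t i))

theorem sum_nceTilt (hp : ∑ ω, p ω = 1) (f : X × Z → ℝ) (i : Fin K) :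
    ∑ t, nceTilt p f i t = 1 := by
  set R : X → (Fin K → Z) → ℝ := fun x v =>
    exp (f (x, v i)) / ((1 / (K : ℝ)) * ∑ j, exp (f (x, v j)))
  have hR : ∀ x, ∑ v : Fin K → Z, (∏ l, margZ p (v l)) * R x v = 1 := fun x => by
    have h := sum_pi_prod_mul_div_mean_eq_one (margZ p) (sum_margZ hp)
      (fun z => exp (f (x, z))) (fun _ => exp_pos _) i
    rwa [Fintype.card_fin] at h
  rw [← (Equiv.arrowProdEquivProdArrow (Fin K) (fun _ => X) (fun _ => Z)).symm.sum_comp,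
    Fintype.sum_prod_type, sum_comm]
  calc ∑ v : Fin K → Z, ∑ u : Fin K → X,
        (∏ l ∈ univ.erase i, p (u l, v l)) * (margX p (u i) * margZ p (v i) * R (u i) v)
      = ∑ v : Fin K → Z, (∑ x, margX p x * margZ p (v i) * R x v) *
          ∏ l ∈ univ.erase i, margZ p (v l) :=
        sum_congr rfl fun v _ => sum_pi_prod_erase_mul (fun l x => p (x, v l)) i
          (fun x => margX p x * margZ p (v i) * R x v)
    _ = ∑ x, margX p x * ∑ v : Fin K → Z, (∏ l, margZ p (v l)) * R x v := by
        simp only [sum_mul, mul_sum]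
        rw [sum_comm]
        refine sum_congr rfl fun x _ => sum_congr rfl fun v _ => ?_
        rw [← mul_prod_erase univ (fun l => margZ p (v l)) (mem_univ i)]
        ring
    _ = 1 := by simp only [hR, mul_one, sum_margX hp]

theorem pos_of_prodPmf_pos (hp : ∀ ω, 0 ≤ p ω) {t : Fin K → X × Z} (ht : 0 < prodPmf p K t)
    (l : Fin K) : 0 < p (t l) :=
  (hp _).lt_of_ne' (prod_ne_zero_iff.mp ht.ne' l (mem_univ l))

theorem prodPmf_mul_log_nceRatio (hp : ∀ ω, 0 ≤ p ω) (f : X × Z → ℝ) (i : Fin K)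
    (t : Fin K → X × Z) :
    prodPmf p K t * log (nceRatio f t i) =
      prodPmf p K t * log (nceTilt p f i t / prodPmf p K t) +
        prodPmf p K t * log (p (t i) / (margX p (t i).1 * margZ p (t i).2)) := by
  have hw : 0 ≤ prodPmf p K t := prod_nonneg fun l _ => hp (t l)
  rcases hw.eq_or_lt with h0 | ht
  · simp [← h0]
  have hpt := pos_of_prodPmf_pos hp ht
  have hX := margX_pos hp (hpt i)
  have hZ := margZ_pos hp (hpt i)
  have hr := nceRatio_pos f t i
  have hrest : ∏ l ∈ univ.erase i, p (t l) ≠ 0 := (prod_pos fun l _ => hpt l).ne'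
  have hratio : nceTilt p f i t / prodPmf p K t =
      margX p (t i).1 * margZ p (t i).2 * nceRatio f t i / p (t i) := by
    rw [nceTilt, prodPmf_eq_mul_prod_erase t i]
    field_simp
  rw [hratio, log_div (by positivity) (hpt i).ne', log_mul (by positivity) hr.ne',
    log_div (hpt i).ne' (by positivity)]
  ring

theorem sum_prodPmf_mul_log_nceRatio_le_mutualInfo (hp : IsPmf p) (f : X × Z → ℝ) (i : Fin K) :
    ∑ t, prodPmf p K t * log (nceRatio f t i) ≤ mutualInfo p := by
  have gibbs := sum_mul_log_div_le_sum_sub_sum (prodPmf p K) (nceTilt p f i)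
    (fun t => prod_nonneg fun l _ => hp.1 (t l)) (nceTilt_nonneg hp.1 f i)
    (fun t ht => nceTilt_pos hp.1 f i (pos_of_prodPmf_pos hp.1 ht))
  rw [sum_nceTilt hp.2, sum_prodPmf hp.2, sub_self] at gibbs
  have hI : mutualInfo p = ∑ t, prodPmf p K t *
      log (p (t i) / (margX p (t i).1 * margZ p (t i).2)) :=
    (sum_prodPmf_mul_apply hp.2 i fun ω => log (p ω / (margX p ω.1 * margZ p ω.2))).symm
  rw [hI, ← sub_nonpos, ← sum_sub_distrib]
  simpa only [prodPmf_mul_log_nceRatio hp.1, add_sub_cancel_right] using gibbs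

end InfoNCE

/-- InfoNCE / Contrastive Predictive Coding lower bound (finite form): for any critic
`f` and `K` i.i.d. pairs drawn from `p`,
`I(X;Z) ≥ E_{p^{⊗K}}[(1/K) Σ_i log(exp f(x_i,z_i) / ((1/K) Σ_j exp f(x_i,z_j)))]`. -/
theorem infoNCE_lower_bound {X Z : Type*} [Fintype X] [Fintype Z]
    (p : X × Z → ℝ) (hp : IsPmf p) (K : ℕ) (hK : 0 < K) (f : X × Z → ℝ) :
    mutualInfo p ≥
      ∑ t : Fin K → X × Z, prodPmf p K t *
        ((1 / (K : ℝ)) * ∑ i, Real.log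
          (Real.exp (f (t i)) /
            ((1 / (K : ℝ)) * ∑ j, Real.exp (f ((t i).1, (t j).2))))) := by
  change ∑ t, prodPmf p K t * ((1 / (K : ℝ)) * ∑ i, log (nceRatio f t i)) ≤ mutualInfo p
  calc ∑ t, prodPmf p K t * ((1 / (K : ℝ)) * ∑ i, log (nceRatio f t i))
      = (1 / (K : ℝ)) * ∑ i, ∑ t, prodPmf p K t * log (nceRatio f t i) := by
        simp only [mul_sum]
        rw [sum_comm]
        exact sum_congr rfl fun i _ => sum_congr rfl fun t _ => by ring
    _ ≤ (1 / (K : ℝ)) * ∑ _i : Fin K, mutualInfo p := by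
        gcongr with i
        exact sum_prodPmf_mul_log_nceRatio_le_mutualInfo hp f i
    _ = mutualInfo p := by
        rw [sum_const, card_univ, Fintype.card_fin, nsmul_eq_mul]
        field_simp [(Nat.cast_pos.mpr hK).ne']
end
end
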